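/- For 0 ≤ α ≤ 1/2, the divergence D^{S,α}(X,Y) = α·min(H(X|Y),H(Y|X)) + (1−α)·max(H(X|Y),H(Y|X)) satisfies the triangle inequality D^{S,α}(X,Y) ≤ D^{S,α}(X,Z) + D^{S,α}(Y,Z). -/

import Mathlib

open Real

/-- Shannon entropy of a discrete random variable `X` on a finite probability
space with weights `p`. -/
noncomputable def ent {Ω S : Type*} [Fintype Ω] [Fintype S] [DecidableEq S]
    (p : Ω → ℝ) (X : Ω → S) : ℝ :=
  ∑ s : S, Real.negMulLog (∑ ω ∈ Finset.univ.filter (fun ω => X ω = s), p ω)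

/-- Conditional entropy `H(X|Y) = H(X,Y) - H(Y)`. -/
noncomputable def condEnt {Ω S T : Type*} [Fintype Ω] [Fintype S] [Fintype T]
    [DecidableEq S] [DecidableEq T] (p : Ω → ℝ) (X : Ω → S) (Y : Ω → T) : ℝ :=
  ent p (fun ω => (X ω, Y ω)) - ent p Y

/-- Mutual information `I(X;Y) = H(X) + H(Y) - H(X,Y)`. -/
noncomputable def mutualInfo {Ω S T : Type*} [Fintype Ω] [Fintype S] [Fintype T]
    [DecidableEq S] [DecidableEq T] (p : Ω → ℝ) (X : Ω → S) (Y : Ω → T) : ℝ :=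
  ent p X + ent p Y - ent p (fun ω => (X ω, Y ω))

/-- The divergence `D^{S,α}`. -/
noncomputable def DS {Ω S T : Type*} [Fintype Ω] [Fintype S] [Fintype T]
    [DecidableEq S] [DecidableEq T] (α : ℝ) (p : Ω → ℝ) (X : Ω → S) (Y : Ω → T) : ℝ :=
  α * min (condEnt p X Y) (condEnt p Y X) + (1 - α) * max (condEnt p X Y) (condEnt p Y X)

/-! Writing `D = H(X,Y) - (H(X) + H(Y)) / 2 + (1/2 - α) |H(X) - H(Y)|`, the triangle inequality
splits into the triangle inequality for `|H(·) - H(·)|`, where `α ≤ 1/2` enters, and the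
submodularity `H(X,Y) + H(Z) ≤ H(X,Z) + H(Y,Z)`. The latter follows from `H(X,Y) ≤ H(X,Y,Z)` and
the subadditivity `H(X,Y) ≤ H(X) + H(Y)` of the (unnormalised) weights on each fibre of `Z`,
which in turn comes from `log x ≤ x - 1`. -/

lemma negMulLog_sum_le_sum_negMulLog {ι : Type*} (s : Finset ι) {f : ι → ℝ}
    (hf : ∀ i ∈ s, 0 ≤ f i) :
    negMulLog (∑ i ∈ s, f i) ≤ ∑ i ∈ s, negMulLog (f i) := by
  simp only [negMulLog, neg_mul, Finset.sum_mul, ← Finset.sum_neg_distrib]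
  refine Finset.sum_le_sum fun i hi => neg_le_neg ?_
  rcases (hf i hi).eq_or_lt with h | h
  · simp [← h]
  · exact mul_le_mul_of_nonneg_left (log_le_log h (Finset.single_le_sum hf hi)) h.le

lemma mul_log_le_of_le {r a b m : ℝ} (hr : 0 ≤ r) (ha : r ≤ a) (hb : r ≤ b) (hm : r ≤ m) :
    r * (log a + log b - log m - log r) ≤ a * b / m - r := by
  rcases hr.eq_or_lt with rfl | hr
  · simpa using div_nonneg (mul_nonneg ha hb) hm
  · have ha := hr.trans_le ha; have hb := hr.trans_le hb; have hm := hr.trans_le hm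
    calc r * (log a + log b - log m - log r) = r * log (a * b / (m * r)) := by
          rw [log_div (by positivity) (by positivity), log_mul ha.ne' hb.ne',
            log_mul hm.ne' hr.ne']
          ring
      _ ≤ r * (a * b / (m * r) - 1) :=
          mul_le_mul_of_nonneg_left (log_le_sub_one_of_pos (by positivity)) hr.le
      _ = a * b / m - r := by field_simp

lemma negMulLog_sum_eq {ι : Type*} (s : Finset ι) (f : ι → ℝ) :
    negMulLog (∑ i ∈ s, f i) = -∑ i ∈ s, f i * log (∑ j ∈ s, f j) := by
  rw [negMulLog, neg_mul, Finset.sum_mul]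

lemma sum_sum_negMulLog_add_negMulLog_le {A B : Type*} [Fintype A] [Fintype B]
    (r : A → B → ℝ) (hr : ∀ a b, 0 ≤ r a b) :
    ∑ a, ∑ b, negMulLog (r a b) + negMulLog (∑ a, ∑ b, r a b)
      ≤ ∑ a, negMulLog (∑ b, r a b) + ∑ b, negMulLog (∑ a, r a b) := by
  set R : A → ℝ := fun a => ∑ b, r a b
  set C : B → ℝ := fun b => ∑ a, r a b
  set m : ℝ := ∑ a, R a
  have hrR : ∀ a b, r a b ≤ R a := fun a b =>
    Finset.single_le_sum (fun b _ => hr a b) (Finset.mem_univ b)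
  have hrC : ∀ a b, r a b ≤ C b := fun a b =>
    Finset.single_le_sum (f := fun a => r a b) (fun a _ => hr a b) (Finset.mem_univ a)
  have hRm : ∀ a, R a ≤ m := fun a =>
    Finset.single_le_sum (fun a _ => Finset.sum_nonneg fun b _ => hr a b) (Finset.mem_univ a)
  have hCm : ∑ b, C b = m := Finset.sum_comm
  have hR : ∑ a, negMulLog (R a) = -∑ a, ∑ b, r a b * log (R a) := by
    simp only [R, negMulLog_sum_eq, Finset.sum_neg_distrib]
  have hC : ∑ b, negMulLog (C b) = -∑ a, ∑ b, r a b * log (C b) := by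
    simp only [C, negMulLog_sum_eq, Finset.sum_neg_distrib]
    rw [Finset.sum_comm]
  have hm : negMulLog m = -∑ a, ∑ b, r a b * log m := by
    simp only [negMulLog, neg_mul, m, R, Finset.sum_mul]
  have hr' : ∑ a, ∑ b, negMulLog (r a b) = -∑ a, ∑ b, r a b * log (r a b) := by
    simp only [negMulLog_eq_neg, Finset.sum_neg_distrib]
  have hterm : ∑ a, ∑ b, r a b * (log (R a) + log (C b) - log m - log (r a b))
      ≤ ∑ a, ∑ b, (R a * C b / m - r a b) :=
    Finset.sum_le_sum fun a _ => Finset.sum_le_sum fun b _ =>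
      mul_log_le_of_le (hr a b) (hrR a b) (hrC a b) ((hrR a b).trans (hRm a))
  -- `m * m / m = m` holds also for `m = 0`, so no case split is needed.
  have hzero : ∑ a, ∑ b, (R a * C b / m - r a b) = 0 := by
    simp only [Finset.sum_sub_distrib, ← Finset.mul_sum, ← Finset.sum_div, ← Finset.sum_mul,
      hCm]
    exact sub_eq_zero.2 (mul_self_div_self m)
  have hsplit : ∑ a, ∑ b, r a b * (log (R a) + log (C b) - log m - log (r a b))
      = ∑ a, ∑ b, negMulLog (r a b) + negMulLog m
        - ∑ a, negMulLog (R a) - ∑ b, negMulLog (C b) := by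
    simp only [hR, hC, hm, hr', mul_add, mul_sub, Finset.sum_add_distrib, Finset.sum_sub_distrib]
    ring
  show ∑ a, ∑ b, negMulLog (r a b) + negMulLog m ≤ ∑ a, negMulLog (R a) + ∑ b, negMulLog (C b)
  linarith

noncomputable def mass {Ω S : Type*} [Fintype Ω] [DecidableEq S] (p : Ω → ℝ) (X : Ω → S)
    (s : S) : ℝ :=
  ∑ ω ∈ Finset.univ.filter (fun ω => X ω = s), p ω

section Entropy

variable {Ω S T U : Type*} [Fintype Ω] [DecidableEq S] [DecidableEq T] [DecidableEq U]

lemma ent_eq_sum_negMulLog_mass [Fintype S] (p : Ω → ℝ) (X : Ω → S) :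
    ent p X = ∑ s, negMulLog (mass p X s) :=
  rfl

lemma mass_nonneg {p : Ω → ℝ} (hp : ∀ ω, 0 ≤ p ω) (X : Ω → S) (s : S) : 0 ≤ mass p X s :=
  Finset.sum_nonneg fun ω _ => hp ω

lemma sum_mass [Fintype S] (p : Ω → ℝ) (X : Ω → S) : ∑ s, mass p X s = ∑ ω, p ω :=
  Finset.sum_fiberwise Finset.univ X p

lemma sum_mass_pair_right [Fintype T] (p : Ω → ℝ) (X : Ω → S) (Y : Ω → T) (s : S) :
    ∑ t, mass p (fun ω => (X ω, Y ω)) (s, t) = mass p X s := by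
  rw [mass, ← Finset.sum_fiberwise _ Y p]
  simp only [mass, Finset.filter_filter, Prod.mk.injEq]

lemma sum_mass_pair_left [Fintype S] (p : Ω → ℝ) (X : Ω → S) (Y : Ω → T) (t : T) :
    ∑ s, mass p (fun ω => (X ω, Y ω)) (s, t) = mass p Y t := by
  rw [mass, ← Finset.sum_fiberwise _ X p]
  simp only [mass, Finset.filter_filter, Prod.mk.injEq, and_comm]

lemma mass_comp_equiv (p : Ω → ℝ) (X : Ω → S) (e : S ≃ T) (s : S) :
    mass p (fun ω => e (X ω)) (e s) = mass p X s := by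
  simp only [mass, e.apply_eq_iff_eq]

lemma ent_comp_equiv [Fintype S] [Fintype T] (p : Ω → ℝ) (X : Ω → S) (e : S ≃ T) :
    ent p (fun ω => e (X ω)) = ent p X := by
  simp only [ent_eq_sum_negMulLog_mass, ← e.sum_comp, mass_comp_equiv]

lemma ent_pair_comm [Fintype S] [Fintype T] (p : Ω → ℝ) (X : Ω → S) (Y : Ω → T) :
    ent p (fun ω => (Y ω, X ω)) = ent p (fun ω => (X ω, Y ω)) :=
  ent_comp_equiv p (fun ω => (X ω, Y ω)) (Equiv.prodComm S T)

lemma ent_le_ent_pair [Fintype S] [Fintype T] {p : Ω → ℝ} (hp : ∀ ω, 0 ≤ p ω)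
    (X : Ω → S) (Y : Ω → T) :
    ent p X ≤ ent p (fun ω => (X ω, Y ω)) := by
  rw [ent_eq_sum_negMulLog_mass, ent_eq_sum_negMulLog_mass, Fintype.sum_prod_type]
  refine Finset.sum_le_sum fun s _ => ?_
  rw [← sum_mass_pair_right p X Y s]
  exact negMulLog_sum_le_sum_negMulLog _ fun t _ => mass_nonneg hp _ _

lemma ent_pair_add_negMulLog_sum_le [Fintype S] [Fintype T] {p : Ω → ℝ} (hp : ∀ ω, 0 ≤ p ω)
    (X : Ω → S) (Y : Ω → T) :
    ent p (fun ω => (X ω, Y ω)) + negMulLog (∑ ω, p ω) ≤ ent p X + ent p Y := by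
  have h := sum_sum_negMulLog_add_negMulLog_le (fun s t => mass p (fun ω => (X ω, Y ω)) (s, t))
    fun s t => mass_nonneg hp _ _
  simp only [sum_mass_pair_right, sum_mass_pair_left, sum_mass] at h
  rwa [ent_eq_sum_negMulLog_mass, Fintype.sum_prod_type]

lemma mass_pair_eq_mass_ite (p : Ω → ℝ) (X : Ω → S) (Z : Ω → U) (s : S) (z : U) :
    mass p (fun ω => (X ω, Z ω)) (s, z) = mass (fun ω => if Z ω = z then p ω else 0) X s := by
  simp only [mass, Finset.sum_filter, Prod.mk.injEq, ite_and]

lemma ent_pair_eq_sum_ent_ite [Fintype S] [Fintype U] (p : Ω → ℝ) (X : Ω → S)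
    (Z : Ω → U) :
    ent p (fun ω => (X ω, Z ω)) = ∑ z, ent (fun ω => if Z ω = z then p ω else 0) X := by
  simp only [ent_eq_sum_negMulLog_mass, Fintype.sum_prod_type, mass_pair_eq_mass_ite]
  exact Finset.sum_comm

lemma sum_ite_eq_mass (p : Ω → ℝ) (Z : Ω → U) (z : U) :
    ∑ ω, (if Z ω = z then p ω else 0) = mass p Z z := by
  rw [mass, Finset.sum_filter]

lemma ent_pair_add_ent_le [Fintype S] [Fintype T] [Fintype U] {p : Ω → ℝ}
    (hp : ∀ ω, 0 ≤ p ω) (X : Ω → S) (Y : Ω → T) (Z : Ω → U) :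
    ent p (fun ω => (X ω, Y ω)) + ent p Z
      ≤ ent p (fun ω => (X ω, Z ω)) + ent p (fun ω => (Y ω, Z ω)) := by
  calc ent p (fun ω => (X ω, Y ω)) + ent p Z
      ≤ ent p (fun ω => ((X ω, Y ω), Z ω)) + ent p Z := by
        gcongr
        exact ent_le_ent_pair hp _ Z
    _ = ∑ z, (ent (fun ω => if Z ω = z then p ω else 0) (fun ω => (X ω, Y ω))
          + negMulLog (∑ ω, (if Z ω = z then p ω else 0))) := by
        simp only [ent_pair_eq_sum_ent_ite, ent_eq_sum_negMulLog_mass p Z,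
          sum_ite_eq_mass, Finset.sum_add_distrib]
    _ ≤ ∑ z, (ent (fun ω => if Z ω = z then p ω else 0) X + ent (fun ω => if Z ω = z then p ω else 0) Y) :=
        Finset.sum_le_sum fun z _ =>
          ent_pair_add_negMulLog_sum_le (fun ω => ite_nonneg (hp ω) le_rfl) X Y
    _ = ent p (fun ω => (X ω, Z ω)) + ent p (fun ω => (Y ω, Z ω)) := by
        rw [Finset.sum_add_distrib, ent_pair_eq_sum_ent_ite, ent_pair_eq_sum_ent_ite]

end Entropy

lemma mul_min_add_mul_max (α x y : ℝ) :
    α * min x y + (1 - α) * max x y = (x + y) / 2 + (1 / 2 - α) * |x - y| := by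
  rw [← min_add_max x y, ← max_sub_min_eq_abs']
  ring

lemma DS_eq {Ω S T : Type*} [Fintype Ω] [Fintype S] [Fintype T] [DecidableEq S] [DecidableEq T]
    (α : ℝ) (p : Ω → ℝ) (X : Ω → S) (Y : Ω → T) :
    DS α p X Y = ent p (fun ω => (X ω, Y ω)) - (ent p X + ent p Y) / 2
      + (1 / 2 - α) * |ent p X - ent p Y| := by
  rw [DS, condEnt, condEnt, ent_pair_comm, mul_min_add_mul_max,
    show ∀ h a b : ℝ, h - b - (h - a) = a - b by intros; ring]
  ring

theorem DS_triangle_general {Ω S T U : Type*} [Fintype Ω] [Fintype S] [Fintype T] [Fintype U]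
    [DecidableEq S] [DecidableEq T] [DecidableEq U]
    (p : Ω → ℝ) (hp0 : ∀ ω, 0 ≤ p ω)
    (α : ℝ) (hα : α ≤ 1 / 2)
    (X : Ω → S) (Y : Ω → T) (Z : Ω → U) :
    DS α p X Y ≤ DS α p X Z + DS α p Y Z := by
  rw [DS_eq, DS_eq, DS_eq]
  have hsub := ent_pair_add_ent_le hp0 X Y Z
  have habs : (1 / 2 - α) * |ent p X - ent p Y|
      ≤ (1 / 2 - α) * (|ent p X - ent p Z| + |ent p Y - ent p Z|) := by
    refine mul_le_mul_of_nonneg_left ?_ (by linarith)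
    exact (abs_sub_le _ (ent p Z) _).trans_eq (by rw [abs_sub_comm (ent p Z)])
  linarith

theorem DS_triangle {Ω S T U : Type*} [Fintype Ω] [Fintype S] [Fintype T] [Fintype U]
    [DecidableEq S] [DecidableEq T] [DecidableEq U]
    (p : Ω → ℝ) (hp0 : ∀ ω, 0 ≤ p ω) (hp1 : ∑ ω, p ω = 1)
    (α : ℝ) (hα0 : 0 ≤ α) (hα : α ≤ 1 / 2)
    (X : Ω → S) (Y : Ω → T) (Z : Ω → U) :
    DS α p X Y ≤ DS α p X Z + DS α p Y Z :=
  DS_triangle_general p hp0 α hα X Y Z
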